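/- arXiv:2502.03071 — 3 statements merged into one kernel-verified Lean document; each statement's English description precedes it below -/
import Mathlib

section
/- Let V ⊆ ℂⁿ be a Zariski-closed subset and v ∈ ℂⁿ. If the set of integers k ∈ ℤ with V + k·v ⊆ V is infinite, then V + t·v = V for every t ∈ ℂ, i.e. V is invariant under translation by the whole complex line ℂ·v. -/
/-- A Zariski-closed subset of ℂⁿ: the common zero locus of a family of polynomials. -/
def IsZClosed (n : ℕ) (V : Set (Fin n → ℂ)) : Prop :=
  ∃ I : Set (MvPolynomial (Fin n) ℂ), V = {x | ∀ p ∈ I, MvPolynomial.eval x p = 0}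

lemma zclosed_key (n : ℕ) (V : Set (Fin n → ℂ)) (hV : IsZClosed n V) (v : Fin n → ℂ)
    (h : {k : ℤ | (fun x => x + (k : ℂ) • v) '' V ⊆ V}.Infinite) :
    ∀ t : ℂ, ∀ x ∈ V, x + t • v ∈ V := by
  obtain ⟨I, hI⟩ := hV
  intro t x hx
  rw [hI]
  intro p hp
  set q : Polynomial ℂ :=
    MvPolynomial.eval₂ Polynomial.C (fun i => Polynomial.C (x i) + Polynomial.C (v i) * Polynomial.X) p with hq
  have heval : ∀ s : ℂ, q.eval s = MvPolynomial.eval (x + s • v) p := by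
    intro s
    have := MvPolynomial.eval₂_comp_left (Polynomial.evalRingHom s) Polynomial.C
      (fun i => Polynomial.C (x i) + Polynomial.C (v i) * Polynomial.X) p
    simp only [Polynomial.coe_evalRingHom] at this
    rw [hq, this]
    have h1 : (Polynomial.evalRingHom s).comp Polynomial.C = RingHom.id ℂ := by
      ext a; simp
    rw [h1]
    have h2 : (Polynomial.eval s ∘ fun i => Polynomial.C (x i) + Polynomial.C (v i) * Polynomial.X)
        = (x + s • v) := by
      funext i
      simp only [Function.comp_apply, Polynomial.eval_add, Polynomial.eval_mul,
        Polynomial.eval_C, Polynomial.eval_X, Pi.add_apply, Pi.smul_apply, smul_eq_mul]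
      ring
    rw [h2]
    rfl
  have hroots : {z : ℂ | q.IsRoot z}.Infinite := by
    apply Set.Infinite.mono ?_ (h.image (Set.injOn_of_injective Int.cast_injective))
    rintro _ ⟨k, hk, rfl⟩
    have hmem : x + (k : ℂ) • v ∈ V := hk ⟨x, hx, rfl⟩
    rw [hI] at hmem
    exact (heval (k : ℂ)).trans (hmem p hp)
  have hq0 : q = 0 := Polynomial.eq_zero_of_infinite_isRoot q hroots
  rw [← heval t, hq0, Polynomial.eval_zero]

/-- If a Zariski-closed set `V ⊆ ℂⁿ` satisfies `V + k·v ⊆ V` for infinitely many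
integers `k`, then `V` is invariant under translation by the whole complex line `ℂ·v`. -/
theorem zclosed_stabilized_by_infinitely_many_integer_translates (n : ℕ) (hn : 0 < n)
    (V : Set (Fin n → ℂ)) (hV : IsZClosed n V) (v : Fin n → ℂ)
    (h : {k : ℤ | (fun x => x + (k : ℂ) • v) '' V ⊆ V}.Infinite) :
    ∀ t : ℂ, (fun x => x + t • v) '' V = V := by
  have key := zclosed_key n V hV v h
  intro t
  apply Set.Subset.antisymm
  · rintro _ ⟨x, hx, rfl⟩
    exact key t x hx
  · intro y hy
    refine ⟨y + (-t) • v, key (-t) y hy, ?_⟩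
    simp [add_assoc, ← add_smul]
end

section
/- Let γ be an n×n matrix with integer entries such that every eigenvalue of γ, viewed as a complex matrix, has absolute value 1. Then every eigenvalue of γ is a root of unity; consequently γ is quasi-unipotent, i.e. there exists a positive integer m such that (γ^m − I)ⁿ = 0. -/
/-!
The characteristic polynomial `p` of `γ` is a monic integer polynomial whose complex roots all lie
on the unit circle, so its Mahler measure is `1`; by Kronecker's theorem every root of `p` is then
a root of unity. If `m` is a common multiple of their orders, each factor `X - r` of `p` divides
`X ^ m - 1`, so `p ∣ (X ^ m - 1) ^ n` and Cayley–Hamilton gives `(γ ^ m - 1) ^ n = 0`.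
-/

open Polynomial

theorem exists_pow_eq_one_of_forall_isOfFinOrder {M : Type*} [Monoid M] {s : Finset M}
    (h : ∀ x ∈ s, IsOfFinOrder x) : ∃ m, 0 < m ∧ ∀ x ∈ s, x ^ m = 1 := by
  refine ⟨∏ x ∈ s, orderOf x, Finset.prod_pos fun x hx => (h x hx).orderOf_pos, fun x hx => ?_⟩
  exact orderOf_dvd_iff_pow_eq_one.mp (Finset.dvd_prod_of_mem orderOf hx)

namespace Polynomial

theorem Monic.mahlerMeasure_eq_one {p : ℂ[X]} (hp : p.Monic) (h : ∀ z ∈ p.roots, ‖z‖ ≤ 1) :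
    p.mahlerMeasure = 1 := by
  have hmax : ∀ z ∈ p.roots, max 1 ‖z‖ = 1 := fun z hz => max_eq_left (h z hz)
  rw [mahlerMeasure_eq_leadingCoeff_mul_prod_roots, hp.leadingCoeff, norm_one, one_mul,
    Multiset.map_congr rfl hmax, Multiset.map_const', Multiset.prod_replicate, one_pow]

theorem pow_eq_one_of_monic_of_norm_aroots_le_one {p : ℤ[X]} (hp : p.Monic)
    (h : ∀ z ∈ p.aroots ℂ, ‖z‖ ≤ 1) {z : ℂ} (hz₀ : z ≠ 0) (hz : z ∈ p.aroots ℂ) :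
    ∃ k, 0 < k ∧ z ^ k = 1 :=
  pow_eq_one_of_mahlerMeasure_eq_one ((hp.map _).mahlerMeasure_eq_one h) hz₀ hz

theorem Monic.dvd_pow_natDegree_of_forall_isRoot {K : Type*} [Field K] {p q : K[X]}
    (hp : p.Monic) (hsplit : p.Splits) (h : ∀ r ∈ p.roots, q.IsRoot r) :
    p ∣ q ^ p.natDegree := by
  rw [hsplit.eq_prod_roots_of_monic hp, natDegree_multiset_prod_X_sub_C_eq_card,
    ← Multiset.prod_replicate, ← Multiset.map_const']
  exact Multiset.prod_dvd_prod_of_dvd _ _ fun r hr => dvd_iff_isRoot.mpr (h r hr)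

end Polynomial

namespace Matrix

variable {ι : Type*} [Fintype ι] [DecidableEq ι]

theorem pow_sub_one_pow_card_eq_zero {K : Type*} [Field K] (A : Matrix ι ι K)
    (hsplit : A.charpoly.Splits) {m : ℕ} (hm : ∀ r ∈ A.charpoly.roots, r ^ m = 1) :
    (A ^ m - 1) ^ Fintype.card ι = 0 := by
  have hdvd : A.charpoly ∣ (X ^ m - 1 : K[X]) ^ Fintype.card ι := by
    simpa [charpoly_natDegree_eq_dim] using
      A.charpoly_monic.dvd_pow_natDegree_of_forall_isRoot hsplit fun r hr => by simp [hm r hr]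
  simpa using aeval_eq_zero_of_dvd_aeval_eq_zero hdvd A.aeval_self_charpoly

theorem isRoot_charpoly_map_intCast_iff (γ : Matrix ι ι ℤ) (z : ℂ) :
    (γ.map (Int.cast : ℤ → ℂ)).charpoly.IsRoot z ↔ z ∈ γ.charpoly.aroots ℂ := by
  rw [mem_aroots', ← eval_map_algebraMap, ← charpoly_map]
  exact ⟨fun hz => ⟨(charpoly_monic _).ne_zero, hz⟩, And.right⟩

end Matrix

theorem integer_matrix_eigenvalues_abs_one_quasiunipotent_general (n : ℕ)
    (γ : Matrix (Fin n) (Fin n) ℤ)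
    (h : ∀ lam : ℂ, ((γ.map (Int.cast : ℤ → ℂ)).charpoly).IsRoot lam →
      ‖lam‖ = 1) :
    (∀ lam : ℂ, ((γ.map (Int.cast : ℤ → ℂ)).charpoly).IsRoot lam →
      ∃ k : ℕ, 0 < k ∧ lam ^ k = 1) ∧
    ∃ m : ℕ, 0 < m ∧ ((γ.map (Int.cast : ℤ → ℂ)) ^ m - 1) ^ n = 0 := by
  classical
  set A := γ.map (Int.cast : ℤ → ℂ)
  have hunity : ∀ lam : ℂ, A.charpoly.IsRoot lam → ∃ k : ℕ, 0 < k ∧ lam ^ k = 1 :=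
    fun lam hlam => pow_eq_one_of_monic_of_norm_aroots_le_one γ.charpoly_monic
      (fun z hz => (h z ((γ.isRoot_charpoly_map_intCast_iff z).mpr hz)).le)
      (norm_ne_zero_iff.mp (h lam hlam ▸ one_ne_zero))
      ((γ.isRoot_charpoly_map_intCast_iff lam).mp hlam)
  obtain ⟨m, hm, hpow⟩ := exists_pow_eq_one_of_forall_isOfFinOrder
    (s := A.charpoly.roots.toFinset) fun r hr => isOfFinOrder_iff_pow_eq_one.mpr
      (hunity r (isRoot_of_mem_roots (Multiset.mem_toFinset.mp hr)))
  refine ⟨hunity, m, hm, ?_⟩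
  simpa using A.pow_sub_one_pow_card_eq_zero (IsAlgClosed.splits _)
    fun r hr => hpow r (Multiset.mem_toFinset.mpr hr)

/-- Kronecker's theorem / Borel's quasi-unipotence: if every complex eigenvalue of an
integer matrix `γ` has absolute value `1`, then every eigenvalue of `γ` is a root of
unity, and consequently `γ` is quasi-unipotent: `(γ^m - I)^n = 0` for some `m > 0`. -/
theorem integer_matrix_eigenvalues_abs_one_quasiunipotent (n : ℕ) (hn : 0 < n)
    (γ : Matrix (Fin n) (Fin n) ℤ)
    (h : ∀ lam : ℂ, ((γ.map (Int.cast : ℤ → ℂ)).charpoly).IsRoot lam →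
      ‖lam‖ = 1) :
    (∀ lam : ℂ, ((γ.map (Int.cast : ℤ → ℂ)).charpoly).IsRoot lam →
      ∃ k : ℕ, 0 < k ∧ lam ^ k = 1) ∧
    ∃ m : ℕ, 0 < m ∧ ((γ.map (Int.cast : ℤ → ℂ)) ^ m - 1) ^ n = 0 :=
  integer_matrix_eigenvalues_abs_one_quasiunipotent_general n γ h
end

section
/- Let H be a Zariski-closed subgroup of (ℂˣ)ⁿ. Then the set of torsion points of H (elements of H of finite order) is Zariski-dense in H. -/
/-- The algebraic torus (ℂˣ)ⁿ, viewed as a subset of ℂⁿ. -/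
def Torus (n : ℕ) : Set (Fin n → ℂ) := {z | ∀ i, z i ≠ 0}

/-- An algebraic subvariety of (ℂˣ)ⁿ: the intersection of the torus with a
Zariski-closed subset of ℂⁿ. -/
def IsTSubvariety (n : ℕ) (V : Set (Fin n → ℂ)) : Prop :=
  ∃ W : Set (Fin n → ℂ), IsZClosed n W ∧ V = Torus n ∩ W

/-- `T` is Zariski-dense in `V`: every Zariski-closed set containing `T` contains `V`. -/
def ZDense (n : ℕ) (T V : Set (Fin n → ℂ)) : Prop :=
  ∀ C : Set (Fin n → ℂ), IsZClosed n C → T ⊆ C → V ⊆ C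

/-- A torsion point of (ℂˣ)ⁿ: an element of finite order. -/
def IsTorsionPt (n : ℕ) (z : Fin n → ℂ) : Prop := ∃ k : ℕ, 0 < k ∧ z ^ k = 1

/-- `H` is a subgroup of (ℂˣ)ⁿ (under coordinatewise multiplication). -/
def IsTSubgroup (n : ℕ) (H : Set (Fin n → ℂ)) : Prop :=
  H ⊆ Torus n ∧ (1 : Fin n → ℂ) ∈ H ∧ (∀ a ∈ H, ∀ b ∈ H, a * b ∈ H) ∧ ∀ a ∈ H, a⁻¹ ∈ H

section TorsionDenseAux

open Complex Real

lemma zdiff {n : ℕ} {z : Fin n → ℂ} (hz : ∀ i, z i ≠ 0) (d e : Fin n → ℕ) :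
    (∏ i, z i ^ d i = ∏ i, z i ^ e i) ↔ ∏ i, z i ^ ((d i : ℤ) - (e i : ℤ)) = 1 := by
  have hne : (∏ i, z i ^ e i) ≠ 0 :=
    Finset.prod_ne_zero_iff.mpr fun i _ => pow_ne_zero _ (hz i)
  have hprod : ∏ i, z i ^ ((d i : ℤ) - (e i : ℤ))
      = (∏ i, z i ^ d i) / (∏ i, z i ^ e i) := by
    rw [← Finset.prod_div_distrib]
    exact Finset.prod_congr rfl fun i _ => by
      rw [zpow_sub₀ (hz i), zpow_natCast, zpow_natCast]
  rw [hprod, div_eq_one_iff_eq hne]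

lemma lemmaA {n : ℕ} (T : Set (Fin n → ℂ)) (h1 : (1 : Fin n → ℂ) ∈ T)
    (hmul : ∀ a ∈ T, ∀ b ∈ T, a * b ∈ T)
    (p : MvPolynomial (Fin n) ℂ) (hp : ∀ t ∈ T, MvPolynomial.eval t p = 0)
    (z : Fin n → ℂ)
    (hz : ∀ d e : Fin n →₀ ℕ, d ∈ p.support → e ∈ p.support →
        (∀ t ∈ T, ∏ i, t i ^ d i = ∏ i, t i ^ e i) →
        ∏ i, z i ^ d i = ∏ i, z i ^ e i) :
    MvPolynomial.eval z p = 0 := by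
  classical
  let S : Submonoid (Fin n → ℂ) :=
    { carrier := T, mul_mem' := fun {a b} ha hb => hmul a ha b hb, one_mem' := h1 }
  let χ : (Fin n →₀ ℕ) → (S →* ℂ) := fun d =>
    { toFun := fun t => ∏ i, (t : Fin n → ℂ) i ^ d i
      map_one' := by simp
      map_mul' := by
        intro a b
        simp [mul_pow, Finset.prod_mul_distrib] }
  have hsum : ∀ t : S, ∑ d ∈ p.support, MvPolynomial.coeff d p * χ d t = 0 := by
    intro t
    have := hp t t.2
    rw [MvPolynomial.eval_eq'] at this
    exact this
  set F : Finset (S →* ℂ) := p.support.image χ with hF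
  have key : ∀ g ∈ F, ∑ d ∈ p.support.filter (fun d => χ d = g),
      MvPolynomial.coeff d p = 0 := by
    have hLI := linearIndependent_iff'.mp (linearIndependent_monoidHom S ℂ)
    intro g hg
    refine hLI F (fun g => ∑ d ∈ p.support.filter (fun d => χ d = g),
      MvPolynomial.coeff d p) ?_ g hg
    funext t
    simp only [Finset.sum_apply, Pi.smul_apply, smul_eq_mul, Pi.zero_apply]
    have : ∀ g ∈ F, (∑ d ∈ p.support.filter (fun d => χ d = g),
        MvPolynomial.coeff d p) * g t
        = ∑ d ∈ p.support.filter (fun d => χ d = g),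
          MvPolynomial.coeff d p * χ d t := by
      intro g _
      rw [Finset.sum_mul]
      refine Finset.sum_congr rfl fun d hd => ?_
      rw [(Finset.mem_filter.mp hd).2]
    rw [Finset.sum_congr rfl this,
      Finset.sum_fiberwise_of_maps_to (fun d hd => Finset.mem_image_of_mem χ hd)
        (fun d => MvPolynomial.coeff d p * χ d t)]
    exact hsum t
  rw [MvPolynomial.eval_eq',
    ← Finset.sum_fiberwise_of_maps_to (fun d hd => Finset.mem_image_of_mem χ hd)
      (fun d => MvPolynomial.coeff d p * ∏ i, z i ^ d i)]
  refine Finset.sum_eq_zero fun g hg => ?_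
  obtain ⟨d0, hd0, hχd0⟩ := Finset.mem_image.mp hg
  have hconst : ∀ d ∈ p.support.filter (fun d => χ d = g),
      (∏ i, z i ^ d i) = ∏ i, z i ^ d0 i := by
    intro d hd
    obtain ⟨hds, hdχ⟩ := Finset.mem_filter.mp hd
    refine hz d d0 hds hd0 fun t ht => ?_
    have : χ d ⟨t, ht⟩ = χ d0 ⟨t, ht⟩ := by rw [hdχ, hχd0]
    exact this
  calc ∑ d ∈ p.support.filter (fun d => χ d = g),
        MvPolynomial.coeff d p * ∏ i, z i ^ d i
      = ∑ d ∈ p.support.filter (fun d => χ d = g),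
        MvPolynomial.coeff d p * ∏ i, z i ^ d0 i := by
        exact Finset.sum_congr rfl fun d hd => by rw [hconst d hd]
    _ = (∑ d ∈ p.support.filter (fun d => χ d = g),
        MvPolynomial.coeff d p) * ∏ i, z i ^ d0 i := by rw [Finset.sum_mul]
    _ = 0 := by rw [key g hg, zero_mul]

lemma charPoint {n : ℕ} (Λ : AddSubgroup (Fin n → ℤ)) (m : Fin n → ℤ) (hm : m ∉ Λ) :
    ∃ t : Fin n → ℂ, (∀ i, t i ≠ 0) ∧ (∃ K : ℕ, 0 < K ∧ t ^ K = 1) ∧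
      (∀ μ ∈ Λ, ∏ i, t i ^ μ i = 1) ∧ ∏ i, t i ^ m i ≠ 1 := by
  classical
  set Q := (Fin n → ℤ) ⧸ Λ
  have hmbar : (QuotientAddGroup.mk' Λ m) ≠ 0 := by
    simpa [QuotientAddGroup.eq_zero_iff] using hm
  obtain ⟨c, hc⟩ := CharacterModule.exists_character_apply_ne_zero_of_ne_zero hmbar
  let cA : Q →+ AddCircle (1 : ℚ) := c
  let u : ℚ → ℂˣ := fun r => Units.mk0 (Complex.exp (2*(π:ℂ)*I*r)) (Complex.exp_ne_zero _)
  have hexpadd : ∀ a b : ℚ, u (a+b) = u a * u b := by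
    intro a b
    ext
    show Complex.exp _ = Complex.exp _ * Complex.exp _
    push_cast
    rw [mul_add, Complex.exp_add]
  let E : ℚ →+ Additive ℂˣ := AddMonoidHom.mk'
    (fun r => Additive.ofMul (u r))
    (by intro a b; exact congrArg Additive.ofMul (hexpadd a b))
  have hEtoMul : ∀ r : ℚ, Additive.toMul (E r) = u r := fun r => rfl
  have hEker : ∀ r ∈ AddSubgroup.zmultiples (1 : ℚ), E r = 0 := by
    intro r hr
    obtain ⟨k, hk⟩ := hr
    have hrc : (r : ℂ) = (k : ℂ) := by
      rw [← hk]; push_cast [zsmul_eq_mul]; ring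
    have h1 : Additive.toMul (E r) = 1 := by
      rw [hEtoMul]
      ext
      show Complex.exp _ = 1
      rw [hrc, show 2*(π:ℂ)*I*(k:ℂ) = (k:ℂ) * (2*(π:ℂ)*I) by ring]
      exact Complex.exp_int_mul_two_pi_mul_I k
    rw [← ofMul_toMul (E r), h1, ofMul_one]
  let ε : AddCircle (1 : ℚ) →+ Additive ℂˣ :=
    QuotientAddGroup.lift (AddSubgroup.zmultiples (1 : ℚ)) E hEker
  have hε0 : ∀ x : AddCircle (1 : ℚ), ε x = 0 → x = 0 := by
    intro x hx
    obtain ⟨r, rfl⟩ := QuotientAddGroup.mk_surjective x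
    have h1 : E r = 0 := hx
    have h2 : Complex.exp (2*(π:ℂ)*I*r) = 1 := by
      have := congrArg (fun y => ((Additive.toMul y : ℂˣ) : ℂ)) h1
      simpa [E, u] using this
    obtain ⟨k, hk⟩ := Complex.exp_eq_one_iff.mp h2
    have h2pi : (2*(π:ℂ)*I) ≠ 0 := by
      simp [Real.pi_ne_zero, Complex.I_ne_zero, Complex.ofReal_ne_zero]
    have hrk : (r : ℂ) = (k : ℂ) := by
      have h3 : (r : ℂ) * (2*(π:ℂ)*I) = (k : ℂ) * (2*(π:ℂ)*I) := by
        rw [← hk]; ring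
      exact mul_right_cancel₀ h2pi h3
    have hrq : r = (k : ℚ) := by exact_mod_cast hrk
    rw [hrq]
    exact (QuotientAddGroup.eq_zero_iff _).mpr ⟨k, by simp⟩
  let g : (Fin n → ℤ) →+ Additive ℂˣ := ε.comp (cA.comp (QuotientAddGroup.mk' Λ))
  let t : Fin n → ℂ := fun i => ((Additive.toMul (g (Pi.single i 1)) : ℂˣ) : ℂ)
  have F1 : ∀ μ : Fin n → ℤ, ∏ i, t i ^ μ i = ((Additive.toMul (g μ) : ℂˣ) : ℂ) := by
    intro μ
    have hdecomp : ∑ i, μ i • Pi.single i (1:ℤ) = μ := by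
      conv_rhs => rw [← Finset.univ_sum_single μ]
      refine Finset.sum_congr rfl fun i _ => ?_
      rw [← Pi.single_smul, smul_eq_mul, mul_one]
    have hux : (∏ i, Additive.toMul (g (Pi.single i 1)) ^ μ i : ℂˣ)
        = Additive.toMul (g μ) := by
      conv_rhs => rw [← hdecomp]
      rw [map_sum, toMul_sum]
      refine Finset.prod_congr rfl fun i _ => ?_
      rw [map_zsmul, toMul_zsmul]
    calc ∏ i, t i ^ μ i
        = ∏ i, (((Additive.toMul (g (Pi.single i 1)) ^ μ i : ℂˣ)) : ℂ) :=
          Finset.prod_congr rfl fun i _ => (Units.val_zpow_eq_zpow_val _ _).symm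
      _ = ((Additive.toMul (g μ) : ℂˣ) : ℂ) := by
          rw [← hux]
          exact (map_prod (Units.coeHom ℂ) _ Finset.univ).symm
  refine ⟨t, fun i => Units.ne_zero _, ?_, ?_, ?_⟩
  · -- torsion
    have hki : ∀ i, ∃ k : ℕ, 0 < k ∧ t i ^ k = 1 := by
      intro i
      set x : AddCircle (1:ℚ) := cA (QuotientAddGroup.mk' Λ (Pi.single i 1)) with hx
      obtain ⟨r, hr⟩ := QuotientAddGroup.mk_surjective x
      refine ⟨r.den, r.pos, ?_⟩
      have hden : (r.den : ℕ) • x = 0 := by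
        rw [← hr, ← QuotientAddGroup.mk_nsmul]
        refine (QuotientAddGroup.eq_zero_iff _).mpr ⟨r.num, ?_⟩
        simp only [smul_eq_mul, zsmul_eq_mul, nsmul_eq_mul, mul_one]
        rw [mul_comm]
        exact_mod_cast (Rat.mul_den_eq_num r).symm
      have h4 : t i ^ r.den = ((Additive.toMul ((r.den : ℕ) • (g (Pi.single i 1))) : ℂˣ) : ℂ) := by
        rw [toMul_nsmul, ← Units.val_pow_eq_pow_val]
      have h5 : (r.den : ℕ) • (g (Pi.single i 1)) = ε ((r.den : ℕ) • x) := by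
        rw [map_nsmul]; rfl
      rw [h4, h5, hden, map_zero, toMul_zero, Units.val_one]
    choose k hkpos hk1 using hki
    refine ⟨∏ i, k i, Finset.prod_pos (fun i _ => hkpos i), ?_⟩
    funext i
    show t i ^ (∏ j, k j) = 1
    obtain ⟨c', hc'⟩ := Finset.dvd_prod_of_mem k (Finset.mem_univ i)
    rw [hc', pow_mul, hk1 i, one_pow]
  · -- kills Λ
    intro μ hμ
    rw [F1 μ]
    have h6 : QuotientAddGroup.mk' Λ μ = 0 := (QuotientAddGroup.eq_zero_iff _).mpr hμ
    show ((Additive.toMul (ε (cA (QuotientAddGroup.mk' Λ μ))) : ℂˣ) : ℂ) = 1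
    rw [h6, map_zero, map_zero, toMul_zero, Units.val_one]
  · -- nontrivial on m
    rw [F1 m]
    intro hcontra
    have h1 : (Additive.toMul (g m) : ℂˣ) = 1 := Units.ext hcontra
    have h2 : g m = 0 := by
      rw [← ofMul_toMul (g m), h1, ofMul_one]
    have h3 : ε (cA (QuotientAddGroup.mk' Λ m)) = 0 := h2
    exact hc (hε0 _ h3)

end TorsionDenseAux

/-- The torsion points of a Zariski-closed subgroup of `(ℂˣ)ⁿ` are Zariski-dense in it. -/
theorem torsion_dense_in_zariski_closed_subgroup (n : ℕ) (hn : 0 < n)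
    (H : Set (Fin n → ℂ)) (hHvar : IsTSubvariety n H) (hHgrp : IsTSubgroup n H) :
    ZDense n {z ∈ H | IsTorsionPt n z} H := by
  classical
  obtain ⟨W, ⟨I0, hI0⟩, hHW⟩ := hHvar
  obtain ⟨hHtor, h1H, hmulH, hinvH⟩ := hHgrp
  -- the torsion subgroup
  set T : Set (Fin n → ℂ) := {z ∈ H | IsTorsionPt n z} with hT
  have h1T : (1 : Fin n → ℂ) ∈ T := ⟨h1H, 1, one_pos, one_pow 1⟩
  have hmulT : ∀ a ∈ T, ∀ b ∈ T, a * b ∈ T := by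
    rintro a ⟨haH, ka, hka, hak⟩ b ⟨hbH, kb, hkb, hbk⟩
    refine ⟨hmulH a haH b hbH, ka * kb, Nat.mul_pos hka hkb, ?_⟩
    rw [mul_pow, pow_mul, hak, one_pow, one_mul, mul_comm ka kb, pow_mul, hbk, one_pow]
  -- the character lattice of H
  set Λ : AddSubgroup (Fin n → ℤ) :=
    { carrier := {μ | ∀ w ∈ H, ∏ i, w i ^ μ i = 1}
      zero_mem' := by intro w _; simp
      add_mem' := by
        intro μ ν hμ hν w hw
        have hwt : ∀ i, w i ≠ 0 := hHtor hw
        calc ∏ i, w i ^ (μ i + ν i)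
            = ∏ i, (w i ^ μ i * w i ^ ν i) :=
              Finset.prod_congr rfl fun i _ => zpow_add₀ (hwt i) _ _
          _ = (∏ i, w i ^ μ i) * ∏ i, w i ^ ν i := Finset.prod_mul_distrib
          _ = 1 := by rw [hμ w hw, hν w hw, one_mul]
      neg_mem' := by
        intro μ hμ w hw
        show ∏ i, w i ^ (-μ) i = 1
        simp only [Pi.neg_apply]
        have : ∏ i, w i ^ (-μ i) = (∏ i, w i ^ μ i)⁻¹ := by
          rw [← Finset.prod_inv_distrib]
          exact Finset.prod_congr rfl fun i _ => zpow_neg _ _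
        rw [this, hμ w hw, inv_one] } with hΛ
  -- the key "respects equivalence" statement
  have crux : ∀ d e : Fin n → ℕ, (∀ t ∈ T, ∏ i, t i ^ d i = ∏ i, t i ^ e i) →
      ∀ h ∈ H, ∏ i, h i ^ d i = ∏ i, h i ^ e i := by
    intro d e hde h hh
    by_contra hne
    set m : Fin n → ℤ := fun i => (d i : ℤ) - e i with hmdef
    have hm : m ∉ Λ := by
      intro hmem
      exact hne ((zdiff (hHtor hh) d e).mpr (hmem h hh))
    obtain ⟨t, htor, ⟨K, hK, htK⟩, hkill, hnontriv⟩ := charPoint Λ m hm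
    -- t belongs to H
    have htH : t ∈ H := by
      rw [hHW]
      refine ⟨htor, ?_⟩
      rw [hI0]
      intro q hq
      have hqH : ∀ w ∈ H, MvPolynomial.eval w q = 0 := by
        intro w hw
        rw [hHW, hI0] at hw
        exact hw.2 q hq
      refine lemmaA H h1H hmulH q hqH t ?_
      intro d' e' _ _ hde'
      have hμ' : (fun i => (d' i : ℤ) - e' i) ∈ Λ := by
        intro w hw
        exact (zdiff (hHtor hw) d' e').mp (hde' w hw)
      exact (zdiff htor d' e').mpr (hkill _ hμ')
    have htT : t ∈ T := ⟨htH, K, hK, htK⟩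
    exact hnontriv ((zdiff htor d e).mp (hde t htT))
  -- conclude density
  rintro C ⟨J, hJ⟩ hTC
  subst hJ
  intro h hh q hq
  have hqT : ∀ t ∈ T, MvPolynomial.eval t q = 0 := fun t ht => hTC ht q hq
  refine lemmaA T h1T hmulT q hqT h ?_
  intro d e _ _ hde
  exact crux d e hde h hh
end
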